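/- Let A be an Arens regular dual Banach algebra such that A* is weakly sequentially complete. If H^1_{w*}(A**, A***) = {0}, then H^1_{w*}(A, A*) = {0}. -/

import Mathlib

/-!
Common definitions: duals, biduals, Arens products, module actions,
derivations, first cohomology-vanishing predicates, weak-star continuity.
-/

noncomputable section

open ContinuousLinearMap Filter Topology Function

namespace ArensPaper

variable (𝕜 : Type) [RCLike 𝕜]

/-- The (topological) dual of a normed space. -/
abbrev Du (X : Type) [NormedAddCommGroup X] [NormedSpace 𝕜 X] : Type :=
  StrongDual 𝕜 X

/-- The bidual of a normed space. -/
abbrev Bi (X : Type) [NormedAddCommGroup X] [NormedSpace 𝕜 X] : Type :=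
  Du 𝕜 (Du 𝕜 X)

/-- Canonical embedding of a normed space into its bidual. -/
abbrev inDu (X : Type) [NormedAddCommGroup X] [NormedSpace 𝕜 X] : X →L[𝕜] Bi 𝕜 X :=
  NormedSpace.inclusionInDoubleDual 𝕜 X

variable {X Y Z : Type} [NormedAddCommGroup X] [NormedSpace 𝕜 X]
  [NormedAddCommGroup Y] [NormedSpace 𝕜 Y] [NormedAddCommGroup Z] [NormedSpace 𝕜 Z]

/-- The transpose (Banach-space adjoint) of a continuous linear map. -/
def tr (T : X →L[𝕜] Y) : Du 𝕜 Y →L[𝕜] Du 𝕜 X :=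
  (compL 𝕜 X Y 𝕜).flip T

/-- The second transpose of a continuous linear map. -/
def bitr (T : X →L[𝕜] Y) : Bi 𝕜 X →L[𝕜] Bi 𝕜 Y :=
  tr 𝕜 (tr 𝕜 T)

/-- The adjoint of a continuous bilinear map `m : X × Y → Z`:
`⟨adj m z' x, y⟩ = ⟨z', m x y⟩`. -/
def adj (m : X →L[𝕜] Y →L[𝕜] Z) : Du 𝕜 Z →L[𝕜] X →L[𝕜] Du 𝕜 Y :=
  ((compL 𝕜 X (Y →L[𝕜] Z) (Du 𝕜 Y)).flip m).comp (compL 𝕜 Y Z 𝕜)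

/-- The first Arens (triple adjoint) extension of a continuous bilinear map
to the biduals: `⟨ar1 m F G, z'⟩ = ⟨F, fun x => ⟨G, fun y => ⟨z', m x y⟩⟩⟩`. -/
def ar1 (m : X →L[𝕜] Y →L[𝕜] Z) : Bi 𝕜 X →L[𝕜] Bi 𝕜 Y →L[𝕜] Bi 𝕜 Z :=
  adj 𝕜 (adj 𝕜 (adj 𝕜 m))

/-- The second Arens extension of a continuous bilinear map. -/
def ar2 (m : X →L[𝕜] Y →L[𝕜] Z) : Bi 𝕜 X →L[𝕜] Bi 𝕜 Y →L[𝕜] Bi 𝕜 Z :=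
  (ar1 𝕜 m.flip).flip

/-- A continuous bilinear map is Arens regular if its two Arens extensions agree. -/
def ArensRegularBil (m : X →L[𝕜] Y →L[𝕜] Z) : Prop :=
  ar1 𝕜 m = ar2 𝕜 m

/-- A map between dual spaces is weak*-weak*-continuous. -/
def WStarCont (f : Du 𝕜 X → Du 𝕜 Y) : Prop :=
  Continuous fun x : WeakDual 𝕜 X => (show WeakDual 𝕜 Y from f (show Du 𝕜 X from x))

/-- A map from a dual space to a normed space is weak*-weak-continuous. -/
def WStarWeakCont {B : Type} [NormedAddCommGroup B] [NormedSpace 𝕜 B]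
    (f : Du 𝕜 X → B) : Prop :=
  Continuous fun x : WeakDual 𝕜 X => (show WeakSpace 𝕜 B from f (show Du 𝕜 X from x))

/-- `D` is a derivation with respect to a product `p` on `C` and module actions
`l`, `r` of `C` on `E`. -/
def IsDer {C E : Type} [NormedAddCommGroup C] [NormedSpace 𝕜 C]
    [NormedAddCommGroup E] [NormedSpace 𝕜 E]
    (p : C → C → C) (l : C → E → E) (r : E → C → E) (D : C →L[𝕜] E) : Prop :=
  ∀ a b : C, D (p a b) = l a (D b) + r (D a) b

/-- `D` is an inner derivation for the module actions `l`, `r`. -/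
def IsInner {C E : Type} [NormedAddCommGroup C] [NormedSpace 𝕜 C]
    [NormedAddCommGroup E] [NormedSpace 𝕜 E]
    (l : C → E → E) (r : E → C → E) (D : C →L[𝕜] E) : Prop :=
  ∃ x : E, ∀ a : C, D a = l a x - r x a

/-- A Banach algebra has a left bounded approximate identity. -/
def HasLBAI (A : Type) [NonUnitalNormedRing A] : Prop :=
  ∃ (ι : Type) (L : Filter ι) (e : ι → A), L.NeBot ∧ (∃ c : ℝ, ∀ i, ‖e i‖ ≤ c) ∧
    ∀ a : A, Tendsto (fun i => e i * a) L (𝓝 a)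

/-- A Banach bimodule structure on `E` over the "Banach algebra" `(C, p)`. -/
structure BimodStr {C : Type} [NormedAddCommGroup C] [NormedSpace 𝕜 C]
    (p : C →L[𝕜] C →L[𝕜] C) (E : Type) [NormedAddCommGroup E] [NormedSpace 𝕜 E] :
    Type where
  l : C →L[𝕜] E →L[𝕜] E
  r : E →L[𝕜] C →L[𝕜] E
  l_mul : ∀ a b x, l (p a b) x = l a (l b x)
  r_mul : ∀ x a b, r (r x a) b = r x (p a b)
  lr : ∀ a x b, r (l a x) b = l a (r x b)

/-- A bundled Banach bimodule over the "Banach algebra" `(C, p)`. -/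
structure BBimod {C : Type} [NormedAddCommGroup C] [NormedSpace 𝕜 C]
    (p : C →L[𝕜] C →L[𝕜] C) : Type 1 where
  E : Type
  [grp : NormedAddCommGroup E]
  [mod : NormedSpace 𝕜 E]
  [cpl : CompleteSpace E]
  str : BimodStr 𝕜 p E

attribute [instance] BBimod.grp BBimod.mod BBimod.cpl

/-- Amenability of the "Banach algebra" `(C, p)`: every continuous derivation into the
dual of any Banach bimodule is inner. -/
def IsAmenableP {C : Type} [NormedAddCommGroup C] [NormedSpace 𝕜 C]
    (p : C →L[𝕜] C →L[𝕜] C) : Prop :=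
  ∀ (M : BBimod 𝕜 p) (D : C →L[𝕜] Du 𝕜 M.E),
    IsDer 𝕜 (fun a b => p a b)
      (fun a f => f.comp (M.str.r.flip a)) (fun f a => f.comp (M.str.l a)) D →
    IsInner 𝕜 (fun a f => f.comp (M.str.r.flip a)) (fun f a => f.comp (M.str.l a)) D

/-- Weak amenability of a Banach algebra: every continuous derivation into the dual
(with the dual actions of the regular bimodule) is inner. -/
def WeaklyAmenable (A : Type) [NonUnitalNormedRing A] [NormedSpace 𝕜 A]
    [IsScalarTower 𝕜 A A] [SMulCommClass 𝕜 A A] : Prop :=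
  ∀ D : A →L[𝕜] Du 𝕜 A,
    IsDer 𝕜 (fun a b => a * b)
      (fun a f => f.comp ((ContinuousLinearMap.mul 𝕜 A).flip a))
      (fun f a => f.comp (ContinuousLinearMap.mul 𝕜 A a)) D →
    IsInner 𝕜 (fun a f => f.comp ((ContinuousLinearMap.mul 𝕜 A).flip a))
      (fun f a => f.comp (ContinuousLinearMap.mul 𝕜 A a)) D

/-- The embedding of the predual `X` into the dual `A*`, given an identification
`j : A ≃ X*`. -/
def predualEmbed {A X : Type} [NormedAddCommGroup A] [NormedSpace 𝕜 A]
    [NormedAddCommGroup X] [NormedSpace 𝕜 X] (j : A ≃ₗᵢ[𝕜] Du 𝕜 X) (x : X) : Du 𝕜 A :=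
  (inDu 𝕜 X x).comp j.toLinearIsometry.toContinuousLinearMap

/-- `j : A ≃ X*` makes `A` a dual Banach algebra: the image of `X` in `A*` is a
submodule of `A*` for the dual actions. -/
def IsDualBanachAlgebra {A X : Type} [NonUnitalNormedRing A] [NormedSpace 𝕜 A]
    [IsScalarTower 𝕜 A A] [SMulCommClass 𝕜 A A]
    [NormedAddCommGroup X] [NormedSpace 𝕜 X] (j : A ≃ₗᵢ[𝕜] Du 𝕜 X) : Prop :=
  ∀ (a : A) (x : X),
    ((predualEmbed 𝕜 j x).comp ((ContinuousLinearMap.mul 𝕜 A).flip a)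
        ∈ Set.range (predualEmbed 𝕜 j)) ∧
    ((predualEmbed 𝕜 j x).comp (ContinuousLinearMap.mul 𝕜 A a)
        ∈ Set.range (predualEmbed 𝕜 j))

/-- A normed space is weakly sequentially complete. -/
def WSCSpace (E : Type) [NormedAddCommGroup E] [NormedSpace 𝕜 E] : Prop :=
  ∀ f : ℕ → E,
    (∀ φ : Du 𝕜 E, ∃ L : 𝕜, Tendsto (fun n => φ (f n)) atTop (𝓝 L)) →
    ∃ e : E, ∀ φ : Du 𝕜 E, Tendsto (fun n => φ (f n)) atTop (𝓝 (φ e))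

/-- Left multiplication by `a ∈ A` restricted to an ideal `I`. -/
def mulLRes {A : Type} [NonUnitalNormedRing A] [NormedSpace 𝕜 A]
    [IsScalarTower 𝕜 A A] [SMulCommClass 𝕜 A A] (I : Submodule 𝕜 A) (a : A)
    (h : ∀ x : I, a * (x : A) ∈ I) : I →L[𝕜] I :=
  ((ContinuousLinearMap.mul 𝕜 A a).comp I.subtypeL).codRestrict I h

/-- Right multiplication by `a ∈ A` restricted to an ideal `I`. -/
def mulRRes {A : Type} [NonUnitalNormedRing A] [NormedSpace 𝕜 A]
    [IsScalarTower 𝕜 A A] [SMulCommClass 𝕜 A A] (I : Submodule 𝕜 A) (a : A)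
    (h : ∀ x : I, (x : A) * a ∈ I) : I →L[𝕜] I :=
  (((ContinuousLinearMap.mul 𝕜 A).flip a).comp I.subtypeL).codRestrict I h


/-- Connes-amenability of the bidual algebra `(A**, p)`: every weak*-weak*-continuous
derivation into a normal dual Banach bimodule is inner. -/
def ConnesAmenableBidual {A : Type} [NonUnitalNormedRing A] [NormedSpace 𝕜 A]
    [IsScalarTower 𝕜 A A] [SMulCommClass 𝕜 A A]
    (p : Bi 𝕜 A →L[𝕜] Bi 𝕜 A →L[𝕜] Bi 𝕜 A) : Prop :=
  ∀ (X : Type) [NormedAddCommGroup X] [NormedSpace 𝕜 X] [CompleteSpace X]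
    (M : BimodStr 𝕜 p (Du 𝕜 X)),
    (∀ f : Du 𝕜 X, WStarCont 𝕜 (fun m : Bi 𝕜 A => M.l m f) ∧
        WStarCont 𝕜 (fun m : Bi 𝕜 A => M.r f m)) →
    ∀ D : Bi 𝕜 A →L[𝕜] Du 𝕜 X,
      IsDer 𝕜 (fun m n => p m n) (fun m f => M.l m f) (fun f m => M.r f m) D →
      WStarCont 𝕜 (fun m => D m) →
      IsInner 𝕜 (fun m f => M.l m f) (fun f m => M.r f m) D

/-!
Restricting functionals on `A*` to the predual `X` gives a projection `π : A** → A` with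
`π ∘ ι = id` for the canonical embedding `ι`; because `X` is a submodule of `A*`, `π` is
multiplicative for the first Arens product. Hence `π* ∘ D ∘ π : A** → A***` is a
weak*-continuous derivation whenever `D : A → A*` is one, and if `Φ ∈ A***` implements it,
then `Φ ∘ ι ∈ A*` implements `D`.
-/

variable {𝕜}

abbrev IsDualDer (p : X →L[𝕜] X →L[𝕜] X) (D : X →L[𝕜] Du 𝕜 X) : Prop :=
  IsDer 𝕜 (fun m n => p m n) (fun m F => F.comp (p.flip m)) (fun F m => F.comp (p m)) D

abbrev IsDualInner (p : X →L[𝕜] X →L[𝕜] X) (D : X →L[𝕜] Du 𝕜 X) : Prop :=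
  IsInner 𝕜 (fun m F => F.comp (p.flip m)) (fun F m => F.comp (p m)) D

lemma tr_apply (T : X →L[𝕜] Y) (f : Du 𝕜 Y) (x : X) : tr 𝕜 T f x = f (T x) := rfl

lemma wStarCont_tr (T : X →L[𝕜] Y) : WStarCont 𝕜 (tr 𝕜 T) :=
  WeakDual.continuous_of_continuous_eval fun x => WeakDual.eval_continuous (T x)

lemma IsDualDer.tr_comp_comp {p : X →L[𝕜] X →L[𝕜] X} {q : Y →L[𝕜] Y →L[𝕜] Y}
    {π : Y →L[𝕜] X} (hπ : ∀ m n, π (q m n) = p (π m) (π n))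
    {D : X →L[𝕜] Du 𝕜 X} (hD : IsDualDer p D) :
    IsDualDer q ((tr 𝕜 π).comp (D.comp π)) := by
  intro m n
  ext H
  simp only [ContinuousLinearMap.comp_apply, tr_apply, add_apply, flip_apply, hπ,
    hD (π m) (π n)]

lemma IsDualInner.of_tr_comp_comp {p : X →L[𝕜] X →L[𝕜] X} {q : Y →L[𝕜] Y →L[𝕜] Y}
    {π : Y →L[𝕜] X} {ι : X →L[𝕜] Y} (hπι : ∀ a, π (ι a) = a)
    (hι : ∀ a b, ι (p a b) = q (ι a) (ι b))
    {D : X →L[𝕜] Du 𝕜 X} (hD : IsDualInner q ((tr 𝕜 π).comp (D.comp π))) :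
    IsDualInner p D := by
  obtain ⟨Φ, hΦ⟩ := hD
  refine ⟨tr 𝕜 ι Φ, fun a => ?_⟩
  ext b
  have h := congrArg (fun F : Du 𝕜 Y => F (ι b)) (hΦ (ι a))
  simpa only [ContinuousLinearMap.comp_apply, tr_apply, sub_apply, flip_apply, hπι, ← hι]
    using h

lemma ar1_inDu_inDu (m : X →L[𝕜] Y →L[𝕜] Z) (x : X) (y : Y) :
    ar1 𝕜 m (inDu 𝕜 X x) (inDu 𝕜 Y y) = inDu 𝕜 Z (m x y) :=
  rfl

section DualSpace

variable {A : Type} [NormedAddCommGroup A] [NormedSpace 𝕜 A] (j : A ≃ₗᵢ[𝕜] Du 𝕜 X)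

def predualEmbedL : X →L[𝕜] Du 𝕜 A :=
  (tr 𝕜 j.toLinearIsometry.toContinuousLinearMap).comp (inDu 𝕜 X)

lemma predualEmbedL_apply (x : X) : predualEmbedL j x = predualEmbed 𝕜 j x := rfl

lemma predualEmbed_apply (x : X) (a : A) : predualEmbed 𝕜 j x a = j a x := rfl

def predualProj : Bi 𝕜 A →L[𝕜] A :=
  j.symm.toLinearIsometry.toContinuousLinearMap.comp (tr 𝕜 (predualEmbedL j))

lemma apply_predualProj (F : Bi 𝕜 A) (x : X) :
    j (predualProj j F) x = F (predualEmbed 𝕜 j x) := by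
  simp [predualProj, tr_apply, predualEmbedL_apply]

lemma predualProj_inDu (a : A) : predualProj j (inDu 𝕜 A a) = a :=
  j.injective <| by ext x; rw [apply_predualProj]; rfl

lemma wStarCont_tr_comp_comp_predualProj {D : A →L[𝕜] Du 𝕜 A}
    (hD : Continuous fun x : WeakDual 𝕜 X =>
      (show WeakDual 𝕜 A from D (j.symm (show Du 𝕜 X from x)))) :
    WStarCont 𝕜 fun m => (tr 𝕜 (predualProj j)).comp (D.comp (predualProj j)) m :=
  (wStarCont_tr _).comp (hD.comp (wStarCont_tr (predualEmbedL j)))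

end DualSpace

section DualBanachAlgebra

variable {A : Type} [NonUnitalNormedRing A] [NormedSpace 𝕜 A] [IsScalarTower 𝕜 A A]
  [SMulCommClass 𝕜 A A] {j : A ≃ₗᵢ[𝕜] Du 𝕜 X}

lemma adj_adj_mul_predualEmbed (hdual : IsDualBanachAlgebra 𝕜 j) (G : Bi 𝕜 A) (x : X) :
    adj 𝕜 (adj 𝕜 (mul 𝕜 A)) G (predualEmbed 𝕜 j x)
      = (predualEmbed 𝕜 j x).comp ((mul 𝕜 A).flip (predualProj j G)) := by
  ext a
  obtain ⟨y, hy⟩ := (hdual a x).2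
  calc G ((predualEmbed 𝕜 j x).comp (mul 𝕜 A a)) = G (predualEmbed 𝕜 j y) := by rw [hy]
    _ = predualEmbed 𝕜 j y (predualProj j G) := (apply_predualProj j G y).symm
    _ = _ := by rw [hy]; rfl

lemma predualProj_ar1_mul (hdual : IsDualBanachAlgebra 𝕜 j) (F G : Bi 𝕜 A) :
    predualProj j (ar1 𝕜 (mul 𝕜 A) F G) = predualProj j F * predualProj j G := by
  refine j.injective (ContinuousLinearMap.ext fun x => ?_)
  obtain ⟨z, hz⟩ := (hdual (predualProj j G) x).1
  calc j (predualProj j (ar1 𝕜 (mul 𝕜 A) F G)) x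
      = F (adj 𝕜 (adj 𝕜 (mul 𝕜 A)) G (predualEmbed 𝕜 j x)) := apply_predualProj j _ x
    _ = F (predualEmbed 𝕜 j z) := by rw [adj_adj_mul_predualEmbed hdual, hz]
    _ = predualEmbed 𝕜 j z (predualProj j F) := (apply_predualProj j F z).symm
    _ = _ := by rw [hz]; rfl

end DualBanachAlgebra

theorem statement11_general {𝕜 : Type} [RCLike 𝕜] {A : Type}
    [NonUnitalNormedRing A] [NormedSpace 𝕜 A] [IsScalarTower 𝕜 A A]
    [SMulCommClass 𝕜 A A]
    {X : Type} [NormedAddCommGroup X] [NormedSpace 𝕜 X]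
    -- `A` is a dual Banach algebra with predual `X`
    (j : A ≃ₗᵢ[𝕜] Du 𝕜 X) (hdual : IsDualBanachAlgebra 𝕜 j)
    -- `H^1_{w*}(A**, A***) = {0}`
    (h1 : ∀ D : Bi 𝕜 A →L[𝕜] Du 𝕜 (Bi 𝕜 A),
      IsDer 𝕜 (fun m n => ar1 𝕜 (ContinuousLinearMap.mul 𝕜 A) m n)
        (fun (m : Bi 𝕜 A) (F : Du 𝕜 (Bi 𝕜 A)) =>
          F.comp ((ar1 𝕜 (ContinuousLinearMap.mul 𝕜 A)).flip m))
        (fun (F : Du 𝕜 (Bi 𝕜 A)) (m : Bi 𝕜 A) =>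
          F.comp (ar1 𝕜 (ContinuousLinearMap.mul 𝕜 A) m)) D →
      WStarCont 𝕜 (fun m => D m) →
      IsInner 𝕜
        (fun (m : Bi 𝕜 A) (F : Du 𝕜 (Bi 𝕜 A)) =>
          F.comp ((ar1 𝕜 (ContinuousLinearMap.mul 𝕜 A)).flip m))
        (fun (F : Du 𝕜 (Bi 𝕜 A)) (m : Bi 𝕜 A) =>
          F.comp (ar1 𝕜 (ContinuousLinearMap.mul 𝕜 A) m)) D) :
    -- `H^1_{w*}(A, A*) = {0}`
    ∀ D : A →L[𝕜] Du 𝕜 A,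
      IsDer 𝕜 (fun a b => a * b)
        (fun (a : A) (f : Du 𝕜 A) => f.comp ((ContinuousLinearMap.mul 𝕜 A).flip a))
        (fun (f : Du 𝕜 A) (a : A) => f.comp (ContinuousLinearMap.mul 𝕜 A a)) D →
      -- `D` is weak*-weak*-continuous (for the weak* topology of `A` induced by `X`)
      (Continuous fun x : WeakDual 𝕜 X =>
        (show WeakDual 𝕜 A from D (j.symm (show Du 𝕜 X from x)))) →
      IsInner 𝕜
        (fun (a : A) (f : Du 𝕜 A) => f.comp ((ContinuousLinearMap.mul 𝕜 A).flip a))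
        (fun (f : Du 𝕜 A) (a : A) => f.comp (ContinuousLinearMap.mul 𝕜 A a)) D := by
  intro D hD hcont
  exact IsDualInner.of_tr_comp_comp (predualProj_inDu j) (fun a b => (ar1_inDu_inDu _ a b).symm)
    (h1 _ (IsDualDer.tr_comp_comp (p := mul 𝕜 A) (predualProj_ar1_mul hdual) hD)
      (wStarCont_tr_comp_comp_predualProj j hcont))

/-- Let `A` be an Arens regular dual Banach algebra (with predual `X`) such that `A*` is
weakly sequentially complete.  If `H^1_{w*}(A**, A***) = {0}`, then
`H^1_{w*}(A, A*) = {0}`. -/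
theorem statement11 {𝕜 : Type} [RCLike 𝕜] {A : Type}
    [NonUnitalNormedRing A] [NormedSpace 𝕜 A] [IsScalarTower 𝕜 A A]
    [SMulCommClass 𝕜 A A] [CompleteSpace A]
    {X : Type} [NormedAddCommGroup X] [NormedSpace 𝕜 X] [CompleteSpace X]
    -- `A` is a dual Banach algebra with predual `X`
    (j : A ≃ₗᵢ[𝕜] Du 𝕜 X) (hdual : IsDualBanachAlgebra 𝕜 j)
    -- `A` is Arens regular
    (hreg : ArensRegularBil 𝕜 (ContinuousLinearMap.mul 𝕜 A))
    -- `A*` is weakly sequentially complete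
    (hwsc : WSCSpace 𝕜 (Du 𝕜 A))
    -- `H^1_{w*}(A**, A***) = {0}`
    (h1 : ∀ D : Bi 𝕜 A →L[𝕜] Du 𝕜 (Bi 𝕜 A),
      IsDer 𝕜 (fun m n => ar1 𝕜 (ContinuousLinearMap.mul 𝕜 A) m n)
        (fun (m : Bi 𝕜 A) (F : Du 𝕜 (Bi 𝕜 A)) =>
          F.comp ((ar1 𝕜 (ContinuousLinearMap.mul 𝕜 A)).flip m))
        (fun (F : Du 𝕜 (Bi 𝕜 A)) (m : Bi 𝕜 A) =>
          F.comp (ar1 𝕜 (ContinuousLinearMap.mul 𝕜 A) m)) D →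
      WStarCont 𝕜 (fun m => D m) →
      IsInner 𝕜
        (fun (m : Bi 𝕜 A) (F : Du 𝕜 (Bi 𝕜 A)) =>
          F.comp ((ar1 𝕜 (ContinuousLinearMap.mul 𝕜 A)).flip m))
        (fun (F : Du 𝕜 (Bi 𝕜 A)) (m : Bi 𝕜 A) =>
          F.comp (ar1 𝕜 (ContinuousLinearMap.mul 𝕜 A) m)) D) :
    -- `H^1_{w*}(A, A*) = {0}`
    ∀ D : A →L[𝕜] Du 𝕜 A,
      IsDer 𝕜 (fun a b => a * b)
        (fun (a : A) (f : Du 𝕜 A) => f.comp ((ContinuousLinearMap.mul 𝕜 A).flip a))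
        (fun (f : Du 𝕜 A) (a : A) => f.comp (ContinuousLinearMap.mul 𝕜 A a)) D →
      -- `D` is weak*-weak*-continuous (for the weak* topology of `A` induced by `X`)
      (Continuous fun x : WeakDual 𝕜 X =>
        (show WeakDual 𝕜 A from D (j.symm (show Du 𝕜 X from x)))) →
      IsInner 𝕜
        (fun (a : A) (f : Du 𝕜 A) => f.comp ((ContinuousLinearMap.mul 𝕜 A).flip a))
        (fun (f : Du 𝕜 A) (a : A) => f.comp (ContinuousLinearMap.mul 𝕜 A a)) D :=
  statement11_general j hdual h1

end ArensPaper
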